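/- Let (C, d, U, D₁, D₂) and (C′, d′, U′, D₁′, D₂′) be Floer data over a field Λ, let (c, φ, μ, Δ₁, Δ₂) be a cobordism datum between them, and let ĈW and ČW be as defined in the context. Then ĈW and ČW commute with the x-actions up to explicit chain homotopies: X̂′ ∘ ĈW − ĈW ∘ X̂ = 𝔎 ∘ d̂ + d̂′ ∘ 𝔎, where 𝔎 : Ĉ → Ĉ′ is defined by 𝔎(α, p) := (μ(α), Δ₁(α)); and X̌′ ∘ ČW − ČW ∘ X̌ = 𝔏 ∘ ď + ď′ ∘ 𝔏, where 𝔏 : Č → Č′ is defined by 𝔏(α, Σ_{i=−∞}^{−1} a_i x^i) := (μ(α) + Δ₂(a_{−1}), 0). -/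

import Mathlib

noncomputable section

variable (Λ : Type*) (V : Type*) [Field Λ] [AddCommGroup V] [Module Λ V]

/-- A Floer datum over the field `Λ`. -/
structure FloerDatum where
  gr : ZMod 8 → Submodule Λ V
  internal : DirectSum.IsInternal gr
  d : V →ₗ[Λ] V
  U : V →ₗ[Λ] V
  D₁ : V →ₗ[Λ] Λ
  D₂ : Λ →ₗ[Λ] V
  d_mem : ∀ (i : ZMod 8), ∀ v ∈ gr i, d v ∈ gr (i - 1)
  U_mem : ∀ (i : ZMod 8), ∀ v ∈ gr i, U v ∈ gr (i - 4)
  D₁_vanish : ∀ (i : ZMod 8), i ≠ 1 → ∀ v ∈ gr i, D₁ v = 0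
  D₂_mem : ∀ a : Λ, D₂ a ∈ gr 4
  d_d : d ∘ₗ d = 0
  D₁_d : D₁ ∘ₗ d = 0
  d_D₂ : d ∘ₗ D₂ = 0
  U_rel : U ∘ₗ d - d ∘ₗ U + D₂ ∘ₗ D₁ = 0

variable (V' : Type*) [AddCommGroup V'] [Module Λ V']
variable {Λ V V'}

/-- A cobordism datum between two Floer data. -/
structure CobordismDatum (F : FloerDatum Λ V) (F' : FloerDatum Λ V') where
  c : Λ
  φ : V →ₗ[Λ] V'
  μ : V →ₗ[Λ] V'
  Δ₁ : V →ₗ[Λ] Λ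
  Δ₂ : Λ →ₗ[Λ] V'
  φ_mem : ∀ (i : ZMod 8), ∀ v ∈ F.gr i, φ v ∈ F'.gr i
  μ_mem : ∀ (i : ZMod 8), ∀ v ∈ F.gr i, μ v ∈ F'.gr (i - 3)
  Δ₁_vanish : ∀ (i : ZMod 8), i ≠ 0 → ∀ v ∈ F.gr i, Δ₁ v = 0
  Δ₂_mem : ∀ a : Λ, Δ₂ a ∈ F'.gr 5
  rel_d : φ ∘ₗ F.d = F'.d ∘ₗ φ
  rel_D₁ : Δ₁ ∘ₗ F.d + c • F.D₁ = F'.D₁ ∘ₗ φ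
  rel_D₂ : φ ∘ₗ F.D₂ = c • F'.D₂ - F'.d ∘ₗ Δ₂
  rel_U : μ ∘ₗ F.d + F'.d ∘ₗ μ + Δ₂ ∘ₗ F.D₁ + φ ∘ₗ F.U - F'.U ∘ₗ φ - F'.D₂ ∘ₗ Δ₁ = 0

variable {W : Type*} [AddCommGroup W] [Module Λ W]
variable {M : Type*} [AddCommGroup M] [Module Λ M]

/-- `p = Σ aᵢ xⁱ ↦ Σ f i aᵢ`, as a linear map on polynomials. -/
def polySum (f : ℕ → (Λ →ₗ[Λ] W)) : Polynomial Λ →ₗ[Λ] W where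
  toFun p := p.sum fun i a => f i a
  map_add' p q :=
    Polynomial.sum_add_index p q _ (fun i => map_zero (f i)) (fun i b c => map_add (f i) b c)
  map_smul' a p := by
    show (a • p).sum (fun i b => f i b) = a • p.sum fun i b => f i b
    rw [Polynomial.sum_smul_index p a _ (fun i => map_zero (f i)),
      Polynomial.sum, Polynomial.sum, Finset.smul_sum]
    exact Finset.sum_congr rfl fun n _ => by rw [← smul_eq_mul, map_smul]

/-- The differential `d̂` on `Ĉ = C ⊕ Λ[x]`. -/
def hatd (F : FloerDatum Λ V) : (V × Polynomial Λ) →ₗ[Λ] (V × Polynomial Λ) :=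
  ((F.d ∘ₗ LinearMap.fst Λ V (Polynomial Λ))
    - (polySum fun i => (F.U ^ i) ∘ₗ F.D₂) ∘ₗ LinearMap.snd Λ V (Polynomial Λ)).prod 0

/-- The map `X̂(α, p) = (U α, D₁ α + x·p)` on `Ĉ`. -/
def hatX (F : FloerDatum Λ V) : (V × Polynomial Λ) →ₗ[Λ] (V × Polynomial Λ) :=
  (F.U ∘ₗ LinearMap.fst Λ V (Polynomial Λ)).prod
    ((Algebra.linearMap Λ (Polynomial Λ)) ∘ₗ F.D₁ ∘ₗ LinearMap.fst Λ V (Polynomial Λ)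
      + (LinearMap.mulLeft Λ (Polynomial.X : Polynomial Λ)) ∘ₗ LinearMap.snd Λ V (Polynomial Λ))

/-- The cobordism map `ĈW : Ĉ → Ĉ′`. -/
def hatCW {F : FloerDatum Λ V} {F' : FloerDatum Λ V'} (G : CobordismDatum F F') :
    (V × Polynomial Λ) →ₗ[Λ] (V' × Polynomial Λ) :=
  (G.φ ∘ₗ LinearMap.fst Λ V (Polynomial Λ)
    + (polySum fun i => (F'.U ^ i) ∘ₗ G.Δ₂
        + ∑ k ∈ Finset.range i, (F'.U ^ k) ∘ₗ G.μ ∘ₗ (F.U ^ (i - 1 - k)) ∘ₗ F.D₂)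
        ∘ₗ LinearMap.snd Λ V (Polynomial Λ)).prod
  (G.c • LinearMap.snd Λ V (Polynomial Λ)
    + (polySum fun k =>
        (∑ i ∈ Finset.range k,
          (LinearMap.smulRight (F'.D₁ ∘ₗ (F'.U ^ (k - 1 - i)) ∘ₗ G.Δ₂)
              ((Polynomial.X : Polynomial Λ) ^ i)
            + LinearMap.smulRight (G.Δ₁ ∘ₗ (F.U ^ (k - 1 - i)) ∘ₗ F.D₂)
              ((Polynomial.X : Polynomial Λ) ^ i)))
        + ∑ j ∈ Finset.range k, ∑ i ∈ Finset.range j,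
            LinearMap.smulRight
              (F'.D₁ ∘ₗ (F'.U ^ (j - i - 1)) ∘ₗ G.μ ∘ₗ (F.U ^ (k - j - 1)) ∘ₗ F.D₂)
              ((Polynomial.X : Polynomial Λ) ^ i))
      ∘ₗ LinearMap.snd Λ V (Polynomial Λ))

/-- Package a family of `Λ`-linear coefficient functionals into a linear map to power series.
We use `PowerSeries Λ` (in the variable `x⁻¹`) as a model for `x⁻¹Λ[[x⁻¹]]`: a power series `q`
represents the series `Σ_{n≥0} (coeff n q) x^{-(n+1)}`. -/
def toPS (c : ℕ → (M →ₗ[Λ] Λ)) : M →ₗ[Λ] PowerSeries Λ where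
  toFun m := PowerSeries.mk fun n => c n m
  map_add' x y := by
    ext n
    simp [PowerSeries.coeff_mk]
  map_smul' a x := by
    ext n
    simp [PowerSeries.coeff_mk]

/-- The differential `ď` on `Č = C ⊕ x⁻¹Λ[[x⁻¹]]`. -/
def checkd (F : FloerDatum Λ V) : (V × PowerSeries Λ) →ₗ[Λ] (V × PowerSeries Λ) :=
  (F.d ∘ₗ LinearMap.fst Λ V (PowerSeries Λ)).prod
    ((toPS fun n => F.D₁ ∘ₗ (F.U ^ n)) ∘ₗ LinearMap.fst Λ V (PowerSeries Λ))

/-- The map `X̌` on `Č`. -/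
def checkX (F : FloerDatum Λ V) : (V × PowerSeries Λ) →ₗ[Λ] (V × PowerSeries Λ) :=
  (F.U ∘ₗ LinearMap.fst Λ V (PowerSeries Λ)
      + F.D₂ ∘ₗ (PowerSeries.coeff (R := Λ) 0) ∘ₗ LinearMap.snd Λ V (PowerSeries Λ)).prod
    ((toPS fun n => PowerSeries.coeff (R := Λ) (n + 1)) ∘ₗ LinearMap.snd Λ V (PowerSeries Λ))

variable {F : FloerDatum Λ V} {F' : FloerDatum Λ V'}

/-- `α ↦ Σ_{i≤-1} Δ₁(U^{-i-1} α) xⁱ`. -/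
def tailDelta (G : CobordismDatum F F') : V →ₗ[Λ] PowerSeries Λ :=
  toPS fun n => G.Δ₁ ∘ₗ (F.U ^ n)

/-- `α ↦ Σ_{i≤-2} (Σ_{i+1≤j≤-1} D₁′(U′^{-j-1}(μ(U^{j-i-1} α)))) xⁱ`. -/
def tailMu (G : CobordismDatum F F') : V →ₗ[Λ] PowerSeries Λ :=
  toPS fun n => ∑ m ∈ Finset.range n, F'.D₁ ∘ₗ (F'.U ^ m) ∘ₗ G.μ ∘ₗ (F.U ^ (n - 1 - m))

/-- The series (in nonpositive powers of `x`, i.e. a power series in `t = x⁻¹`)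
`S = c + Σ_{j≤-1} Δ₁(U^{-j-1}(D₂ 1)) xʲ + Σ_{j≤-1} D₁′(U′^{-j-1}(Δ₂ 1)) xʲ
   + Σ_{j,k≤-1} D₁′(U′^{-j-1}(μ(U^{-k-1}(D₂ 1)))) x^{j+k}`. -/
def Sser (G : CobordismDatum F F') : PowerSeries Λ :=
  PowerSeries.mk fun m =>
    match m with
    | 0 => G.c
    | n + 1 =>
      G.Δ₁ ((F.U ^ n) (F.D₂ 1)) + F'.D₁ ((F'.U ^ n) (G.Δ₂ 1)) +
        ∑ s ∈ Finset.range n, F'.D₁ ((F'.U ^ s) (G.μ ((F.U ^ (n - 1 - s)) (F.D₂ 1))))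

/-- The cobordism map `ČW : Č → Č′`. -/
def checkCW (G : CobordismDatum F F') : (V × PowerSeries Λ) →ₗ[Λ] (V' × PowerSeries Λ) :=
  (G.φ ∘ₗ LinearMap.fst Λ V (PowerSeries Λ)).prod
    ((tailDelta G + tailMu G) ∘ₗ LinearMap.fst Λ V (PowerSeries Λ)
      + (LinearMap.mulRight Λ (Sser G)) ∘ₗ LinearMap.snd Λ V (PowerSeries Λ))

/-- The chain homotopy `𝔎 : Ĉ → Ĉ′`, `𝔎(α, p) = (μ α, Δ₁ α)`. -/
def bigK (G : CobordismDatum F F') : (V × Polynomial Λ) →ₗ[Λ] (V' × Polynomial Λ) :=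
  (G.μ ∘ₗ LinearMap.fst Λ V (Polynomial Λ)).prod
    ((Algebra.linearMap Λ (Polynomial Λ)) ∘ₗ G.Δ₁ ∘ₗ LinearMap.fst Λ V (Polynomial Λ))

/-- The chain homotopy `𝔏 : Č → Č′`, `𝔏(α, Σ_{i≤-1} aᵢ xⁱ) = (μ α + Δ₂ a₋₁, 0)`. -/
def bigL (G : CobordismDatum F F') : (V × PowerSeries Λ) →ₗ[Λ] (V' × PowerSeries Λ) :=
  (G.μ ∘ₗ LinearMap.fst Λ V (PowerSeries Λ)
    + G.Δ₂ ∘ₗ (PowerSeries.coeff (R := Λ) 0) ∘ₗ LinearMap.snd Λ V (PowerSeries Λ)).prod 0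

/-!
Both identities are checked on generators. On `C` they are the relations of the cobordism datum
in disguise: `rel_U` and `rel_D₁` for `Ĉ`, and `rel_U` for `Č`. On the polynomial part no relation
is needed: `ĈW(0, xⁿ⁺¹) = X̂′ ĈW(0, xⁿ) + (μ, Δ₁)(Uⁿ D₂ 1) = X̂′ ĈW(0, xⁿ) - 𝔎 d̂(0, xⁿ)` is
just a re-indexing of the defining sums. On the series part, the coefficients of `S` beyond the
constant `c` are those of the tail of `ČW` at `D₂ 1` plus `D₁′ U′ⁿ Δ₂ 1`; hence shifting `q · S`
reproduces `ČW ∘ X̌` up to `ď′ 𝔏`, while `rel_D₂` takes care of the `C′`-component.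
-/

namespace Polynomial

variable {R : Type*} [CommSemiring R]

theorem sum_range_succ_smul_X_pow_sub (f : ℕ → R) (n : ℕ) :
    ∑ i ∈ Finset.range (n + 1), f (n - i) • (X : R[X]) ^ i
      = X * ∑ i ∈ Finset.range n, f (n - 1 - i) • X ^ i + C (f n) := by
  rw [Finset.sum_range_succ', Finset.mul_sum]
  congr 1
  · refine Finset.sum_congr rfl fun i _ => ?_
    rw [mul_smul_comm, ← pow_succ', Nat.sub_sub, Nat.add_comm 1 i]
  · simp [smul_eq_C_mul]

theorem sum_range_succ_sum_range_smul_X_pow_sub (g : ℕ → ℕ → R) (n : ℕ) :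
    ∑ j ∈ Finset.range (n + 1), ∑ i ∈ Finset.range j, g (j - 1 - i) (n - j) • (X : R[X]) ^ i
      = X * ∑ j ∈ Finset.range n, ∑ i ∈ Finset.range j, g (j - 1 - i) (n - 1 - j) • X ^ i
        + ∑ j ∈ Finset.range n, C (g j (n - 1 - j)) := by
  rw [Finset.sum_range_succ', Finset.range_zero, Finset.sum_empty, add_zero, Finset.mul_sum,
    ← Finset.sum_add_distrib]
  refine Finset.sum_congr rfl fun j _ => ?_
  rw [Nat.sub_add_eq, Nat.sub_right_comm n j 1, ← sum_range_succ_smul_X_pow_sub (g · (n - 1 - j))]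
  simp only [add_tsub_cancel_right]

end Polynomial

namespace PowerSeries

@[simp]
theorem mk_zero {R : Type*} [Semiring R] : (mk fun _ => (0 : R)) = 0 := by
  ext
  simp

theorem coeff_succ_mul {R : Type*} [CommSemiring R] (f g : PowerSeries R) (n : ℕ) :
    coeff (n + 1) (f * g)
      = constantCoeff f * coeff (n + 1) g + coeff n ((mk fun p => coeff (p + 1) f) * g) := by
  simp only [coeff_mul, Finset.Nat.sum_antidiagonal_succ, coeff_mk, coeff_zero_eq_constantCoeff]

end PowerSeries

namespace CobordismDatum

variable (G : CobordismDatum F F')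

theorem D₁_φ_apply (α : V) : F'.D₁ (G.φ α) = G.Δ₁ (F.d α) + G.c * F.D₁ α := by
  simpa using (LinearMap.congr_fun G.rel_D₁ α).symm

theorem φ_D₂_apply (a : Λ) : G.φ (F.D₂ a) = F'.D₂ (a * G.c) - F'.d (G.Δ₂ a) := by
  simpa [mul_comm a, ← smul_eq_mul] using LinearMap.congr_fun G.rel_D₂ a

theorem U_φ_apply (α : V) :
    F'.U (G.φ α) = G.μ (F.d α) + F'.d (G.μ α) + G.Δ₂ (F.D₁ α) + G.φ (F.U α) - F'.D₂ (G.Δ₁ α) := by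
  have h := LinearMap.congr_fun G.rel_U α
  simp only [LinearMap.sub_apply, LinearMap.add_apply, LinearMap.comp_apply,
    LinearMap.zero_apply] at h
  rw [sub_sub, sub_eq_zero] at h
  exact eq_sub_of_add_eq h.symm

end CobordismDatum

section Hat

open Polynomial

variable (G : CobordismDatum F F')

theorem polySum_X_pow (f : ℕ → (Λ →ₗ[Λ] W)) (n : ℕ) : polySum f (X ^ n) = f n 1 := by
  rw [X_pow_eq_monomial]
  exact sum_monomial_index _ _ (map_zero (f n))

theorem hatX_apply (z : V × Λ[X]) : hatX F z = (F.U z.1, C (F.D₁ z.1) + X * z.2) := rfl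

theorem hatd_apply (α : V) (p : Λ[X]) :
    hatd F (α, p) = (F.d α - polySum (fun i => (F.U ^ i) ∘ₗ F.D₂) p, 0) := rfl

theorem bigK_apply (α : V) (p : Λ[X]) : bigK G (α, p) = (G.μ α, C (G.Δ₁ α)) := rfl

theorem hatCW_inl (α : V) : hatCW G (α, 0) = (G.φ α, 0) := by
  simp [hatCW]

theorem hatCW_C (a : Λ) : hatCW G (0, C a) = (G.Δ₂ a, C (G.c * a)) := by
  simp [hatCW, polySum, sum_C_index]

theorem hatCW_X_pow (n : ℕ) :
    hatCW G (0, X ^ n) =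
      ((F'.U ^ n) (G.Δ₂ 1) + ∑ k ∈ Finset.range n, (F'.U ^ k) (G.μ ((F.U ^ (n - 1 - k)) (F.D₂ 1))),
        G.c • X ^ n
          + ∑ i ∈ Finset.range n,
              (F'.D₁ ((F'.U ^ (n - 1 - i)) (G.Δ₂ 1)) + G.Δ₁ ((F.U ^ (n - 1 - i)) (F.D₂ 1))) • X ^ i
          + ∑ j ∈ Finset.range n, ∑ i ∈ Finset.range j,
              F'.D₁ ((F'.U ^ (j - 1 - i)) (G.μ ((F.U ^ (n - 1 - j)) (F.D₂ 1)))) • X ^ i) := by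
  simp [hatCW, polySum_X_pow, add_smul, Nat.sub_right_comm _ _ 1, add_assoc]

theorem hatCW_X_pow_succ_fst (n : ℕ) :
    (hatCW G (0, X ^ (n + 1))).1 = F'.U (hatCW G (0, X ^ n)).1 + G.μ ((F.U ^ n) (F.D₂ 1)) := by
  simp only [hatCW_X_pow, add_tsub_cancel_right, map_add, map_sum, Finset.sum_range_succ', pow_zero,
    Nat.sub_zero, Module.End.one_apply, ← Module.End.mul_apply, ← pow_succ']
  rw [add_assoc]
  congr 2
  exact Finset.sum_congr rfl fun k _ => by rw [Nat.sub_add_eq, Nat.sub_right_comm]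

theorem hatCW_X_pow_succ_snd (n : ℕ) :
    (hatCW G (0, X ^ (n + 1))).2
      = X * (hatCW G (0, X ^ n)).2
        + C (F'.D₁ (hatCW G (0, X ^ n)).1 + G.Δ₁ ((F.U ^ n) (F.D₂ 1))) := by
  simp only [hatCW_X_pow, add_tsub_cancel_right]
  rw [sum_range_succ_smul_X_pow_sub
      (fun m => F'.D₁ ((F'.U ^ m) (G.Δ₂ 1)) + G.Δ₁ ((F.U ^ m) (F.D₂ 1))),
    sum_range_succ_sum_range_smul_X_pow_sub
      (fun m k => F'.D₁ ((F'.U ^ m) (G.μ ((F.U ^ k) (F.D₂ 1)))))]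
  simp only [map_add, map_sum, mul_add, pow_succ', mul_smul_comm]
  abel

theorem hatCW_hatX_homotopy_inl (α : V) :
    hatX F' (hatCW G (α, 0)) - hatCW G (hatX F (α, 0))
      = bigK G (hatd F (α, 0)) + hatd F' (bigK G (α, 0)) := by
  have hsplit : hatX F (α, 0) = (F.U α, 0) + (0, C (F.D₁ α)) := by simp [hatX_apply]
  rw [hsplit, map_add, hatCW_inl, hatCW_inl, hatCW_C]
  simp only [hatX_apply, hatd_apply, bigK_apply, map_zero, mul_zero, add_zero, sub_zero]
  refine Prod.ext ?_ ?_
  · simp [polySum, sum_C_index, G.U_φ_apply]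
    abel
  · simp [G.D₁_φ_apply]

theorem hatCW_hatX_homotopy_X_pow (n : ℕ) :
    hatX F' (hatCW G (0, X ^ n)) - hatCW G (hatX F (0, X ^ n))
      = bigK G (hatd F (0, X ^ n)) + hatd F' (bigK G (0, X ^ n)) := by
  have hX : hatX F (0, X ^ n) = (0, X ^ (n + 1)) := by simp [hatX_apply, pow_succ']
  rw [hX]
  refine Prod.ext ?_ ?_
  · simp [hatX_apply, hatd_apply, bigK_apply, hatCW_X_pow_succ_fst, polySum_X_pow]
  · simp [hatX_apply, hatd_apply, bigK_apply, hatCW_X_pow_succ_snd, polySum_X_pow]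
    abel

theorem hatCW_hatX_homotopy :
    hatX F' ∘ₗ hatCW G - hatCW G ∘ₗ hatX F = bigK G ∘ₗ hatd F + hatd F' ∘ₗ bigK G := by
  apply LinearMap.prod_ext
  · exact LinearMap.ext (hatCW_hatX_homotopy_inl G)
  · refine lhom_ext' fun n => LinearMap.ext_ring ?_
    simpa [← X_pow_eq_monomial] using hatCW_hatX_homotopy_X_pow G n

end Hat

section Check

open PowerSeries

variable (G : CobordismDatum F F')

theorem checkX_apply (z : V × PowerSeries Λ) :
    checkX F z = (F.U z.1 + F.D₂ (constantCoeff z.2), mk fun n => coeff (n + 1) z.2) := by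
  simp [checkX, toPS]

theorem checkd_apply (z : V × PowerSeries Λ) :
    checkd F z = (F.d z.1, mk fun n => F.D₁ ((F.U ^ n) z.1)) := rfl

theorem checkCW_apply (z : V × PowerSeries Λ) :
    checkCW G z = (G.φ z.1, tailDelta G z.1 + tailMu G z.1 + z.2 * Sser G) := rfl

theorem bigL_apply (z : V × PowerSeries Λ) :
    bigL G z = (G.μ z.1 + G.Δ₂ (constantCoeff z.2), 0) := by
  simp [bigL]

theorem coeff_tailDelta (n : ℕ) (α : V) : coeff n (tailDelta G α) = G.Δ₁ ((F.U ^ n) α) := by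
  simp [tailDelta, toPS]

theorem coeff_tailMu (n : ℕ) (α : V) :
    coeff n (tailMu G α)
      = ∑ m ∈ Finset.range n, F'.D₁ ((F'.U ^ m) (G.μ ((F.U ^ (n - 1 - m)) α))) := by
  simp [tailMu, toPS]

theorem constantCoeff_tailDelta (α : V) : constantCoeff (tailDelta G α) = G.Δ₁ α := by
  simp [tailDelta, toPS]

theorem constantCoeff_tailMu (α : V) : constantCoeff (tailMu G α) = 0 := by
  simp [tailMu, toPS]

theorem coeff_succ_tailDelta (n : ℕ) (α : V) :
    coeff (n + 1) (tailDelta G α) = coeff n (tailDelta G (F.U α)) := by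
  rw [coeff_tailDelta, coeff_tailDelta, pow_succ, Module.End.mul_apply]

theorem coeff_succ_tailMu (n : ℕ) (α : V) :
    coeff (n + 1) (tailMu G α) = coeff n (tailMu G (F.U α)) + F'.D₁ ((F'.U ^ n) (G.μ α)) := by
  rw [coeff_tailMu, coeff_tailMu, Finset.sum_range_succ, add_tsub_cancel_right, Nat.sub_self,
    pow_zero, Module.End.one_apply]
  congr 1
  refine Finset.sum_congr rfl fun m hm => ?_
  have hmn : n - 1 - m + 1 = n - m := by have := Finset.mem_range.1 hm; omega
  rw [← Module.End.mul_apply, ← pow_succ, hmn]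

theorem constantCoeff_Sser : constantCoeff (Sser G) = G.c := by
  simp [Sser]

theorem coeff_succ_Sser (n : ℕ) :
    coeff (n + 1) (Sser G)
      = coeff n (tailDelta G (F.D₂ 1)) + coeff n (tailMu G (F.D₂ 1))
        + F'.D₁ ((F'.U ^ n) (G.Δ₂ 1)) := by
  simp only [Sser, coeff_mk, coeff_tailDelta, coeff_tailMu]
  abel

theorem checkCW_checkX_homotopy_inl (α : V) :
    checkX F' (checkCW G (α, 0)) - checkCW G (checkX F (α, 0))
      = bigL G (checkd F (α, 0)) + checkd F' (bigL G (α, 0)) := by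
  refine Prod.ext ?_ (PowerSeries.ext fun n => ?_)
  · simp [checkX_apply, checkCW_apply, checkd_apply, bigL_apply, constantCoeff_tailDelta,
      constantCoeff_tailMu, G.U_φ_apply]
    abel
  · simp [checkX_apply, checkCW_apply, checkd_apply, bigL_apply, coeff_succ_tailDelta,
      coeff_succ_tailMu]

theorem checkCW_checkX_homotopy_inr (q : PowerSeries Λ) :
    checkX F' (checkCW G (0, q)) - checkCW G (checkX F (0, q))
      = bigL G (checkd F (0, q)) + checkd F' (bigL G (0, q)) := by
  refine Prod.ext ?_ (PowerSeries.ext fun n => ?_)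
  · simp [checkX_apply, checkCW_apply, checkd_apply, bigL_apply, constantCoeff_Sser,
      G.φ_D₂_apply]
  · simp [checkX_apply, checkCW_apply, checkd_apply, bigL_apply, coeff_succ_mul, coeff_succ_Sser]
    set a := constantCoeff q
    have hD₂ : F.D₂ a = a • F.D₂ 1 := by rw [← map_smul, smul_eq_mul, mul_one]
    have hΔ₂ : G.Δ₂ a = a • G.Δ₂ 1 := by rw [← map_smul, smul_eq_mul, mul_one]
    simp only [hD₂, hΔ₂, map_smul, smul_eq_mul]
    ring

theorem checkCW_checkX_homotopy :
    checkX F' ∘ₗ checkCW G - checkCW G ∘ₗ checkX F = bigL G ∘ₗ checkd F + checkd F' ∘ₗ bigL G :=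
  LinearMap.prod_ext (LinearMap.ext (checkCW_checkX_homotopy_inl G))
    (LinearMap.ext (checkCW_checkX_homotopy_inr G))

end Check

/-- `ĈW` and `ČW` commute with the `x`-actions up to the explicit chain homotopies `𝔎`, `𝔏`. -/
theorem stmt_10 (G : CobordismDatum F F') :
    hatX F' ∘ₗ hatCW G - hatCW G ∘ₗ hatX F = bigK G ∘ₗ hatd F + hatd F' ∘ₗ bigK G ∧
    checkX F' ∘ₗ checkCW G - checkCW G ∘ₗ checkX F
      = bigL G ∘ₗ checkd F + checkd F' ∘ₗ bigL G :=
  ⟨hatCW_hatX_homotopy G, checkCW_checkX_homotopy G⟩
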